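/- Let φ, Φ ∈ ℂ with Re(Φ·conj(φ)) > 0 and let T be a bounded linear operator on a complex Hilbert space such that Re⟨Φx − Tx, Tx − φx⟩ ≥ 0 for all unit vectors x. Then 2·sqrt(Re(Φ·conj(φ)))·‖T‖ ≤ |Φ + φ|·w(T). -/

import Mathlib

/-! Expanding the hypothesis at a unit vector `x` gives
`‖T x‖² + Re(Φ φ̄) ≤ Re((Φ + φ)⟨T x, x⟩) ≤ |Φ + φ| w(T)`, and the left side dominates
`2 √Re(Φ φ̄) ‖T x‖` by AM-GM. Taking the supremum over unit vectors bounds `‖T‖`. -/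

noncomputable def numRadius {H : Type*} [NormedAddCommGroup H] [InnerProductSpace ℂ H]
    (T : H →L[ℂ] H) : ℝ :=
  sSup {r : ℝ | ∃ x : H, ‖x‖ = 1 ∧ r = ‖(inner ℂ (T x) x : ℂ)‖}

open ComplexConjugate

section

variable {H : Type*} [NormedAddCommGroup H] [InnerProductSpace ℂ H]

theorem numRadius_bddAbove (T : H →L[ℂ] H) :
    BddAbove {r : ℝ | ∃ x : H, ‖x‖ = 1 ∧ r = ‖(inner ℂ (T x) x : ℂ)‖} := by
  refine ⟨‖T‖, ?_⟩
  rintro r ⟨x, hx, rfl⟩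
  calc ‖(inner ℂ (T x) x : ℂ)‖ ≤ ‖T x‖ * ‖x‖ := norm_inner_le_norm _ _
    _ ≤ ‖T‖ * ‖x‖ * ‖x‖ := by gcongr; exact T.le_opNorm x
    _ = ‖T‖ := by rw [hx, mul_one, mul_one]

theorem numRadius_nonneg (T : H →L[ℂ] H) : 0 ≤ numRadius T :=
  Real.sSup_nonneg fun _ ⟨_, _, hr⟩ ↦ hr ▸ norm_nonneg _

theorem norm_inner_apply_le_numRadius (T : H →L[ℂ] H) {x : H} (hx : ‖x‖ = 1) :
    ‖(inner ℂ (T x) x : ℂ)‖ ≤ numRadius T :=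
  le_csSup (numRadius_bddAbove T) ⟨x, hx, rfl⟩

theorem re_inner_smul_sub_sub_smul (Φ φ : ℂ) (x y : H) :
    (inner ℂ (Φ • x - y) (y - φ • x) : ℂ).re =
      ((Φ + φ) * inner ℂ y x).re - (Φ * conj φ).re * ‖x‖ ^ 2 - ‖y‖ ^ 2 := by
  have hxy : (inner ℂ x y : ℂ) = conj (inner ℂ y x) := (inner_conj_symm _ _).symm
  rw [inner_sub_left, inner_sub_right, inner_sub_right, inner_smul_left, inner_smul_right,
    inner_smul_left, inner_smul_right, hxy, inner_self_eq_norm_sq_to_K,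
    inner_self_eq_norm_sq_to_K]
  simp only [Complex.coe_algebraMap, ← Complex.ofReal_pow, Complex.sub_re, Complex.add_re,
    Complex.add_im, Complex.mul_re, Complex.mul_im, Complex.conj_re, Complex.conj_im,
    Complex.ofReal_re, Complex.ofReal_im]
  ring

theorem sq_norm_apply_add_re_le_of_re_inner_nonneg (T : H →L[ℂ] H) (Φ φ : ℂ) {x : H}
    (hx : ‖x‖ = 1) (h : 0 ≤ (inner ℂ (Φ • x - T x) (T x - φ • x) : ℂ).re) :
    ‖T x‖ ^ 2 + (Φ * conj φ).re ≤ ‖Φ + φ‖ * numRadius T := by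
  rw [re_inner_smul_sub_sub_smul, hx] at h
  calc ‖T x‖ ^ 2 + (Φ * conj φ).re ≤ ((Φ + φ) * inner ℂ (T x) x).re := by linarith
    _ ≤ ‖(Φ + φ) * inner ℂ (T x) x‖ := Complex.re_le_norm _
    _ = ‖Φ + φ‖ * ‖(inner ℂ (T x) x : ℂ)‖ := norm_mul _ _
    _ ≤ ‖Φ + φ‖ * numRadius T := by gcongr; exact norm_inner_apply_le_numRadius T hx

end

theorem two_mul_sqrt_mul_le_sq_add {p : ℝ} (hp : 0 ≤ p) (t : ℝ) : 2 * √p * t ≤ t ^ 2 + p := by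
  simpa [Real.sq_sqrt hp, add_comm] using two_mul_le_add_sq (√p) t

theorem stmt_10_general {H : Type*} [NormedAddCommGroup H] [InnerProductSpace ℂ H]
    (T : H →L[ℂ] H) (phi Phi : ℂ) (hre : 0 < (Phi * starRingEnd ℂ phi).re)
    (h : ∀ x : H, ‖x‖ = 1 → 0 ≤ (inner ℂ (Phi • x - T x) (T x - phi • x) : ℂ).re) :
    2 * Real.sqrt (Phi * starRingEnd ℂ phi).re * ‖T‖ ≤
      ‖Phi + phi‖ * numRadius T := by
  have hunit : ∀ x : H, ‖x‖ = 1 →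
      2 * √(Phi * conj phi).re * ‖T x‖ ≤ ‖Phi + phi‖ * numRadius T := fun x hx ↦
    (two_mul_sqrt_mul_le_sq_add hre.le _).trans
      (sq_norm_apply_add_re_le_of_re_inner_nonneg T Phi phi hx (h x hx))
  have hpos : 0 < 2 * √(Phi * conj phi).re := mul_pos two_pos (Real.sqrt_pos.2 hre)
  rw [mul_comm, ← le_div_iff₀ hpos]
  exact T.opNorm_le_of_unit_norm
    (div_nonneg (mul_nonneg (norm_nonneg _) (numRadius_nonneg T)) hpos.le)
    fun x hx ↦ (le_div_iff₀' hpos).2 (hunit x hx)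

theorem stmt_10 {H : Type*} [NormedAddCommGroup H] [InnerProductSpace ℂ H] [CompleteSpace H]
    (T : H →L[ℂ] H) (phi Phi : ℂ) (hre : 0 < (Phi * starRingEnd ℂ phi).re)
    (h : ∀ x : H, ‖x‖ = 1 → 0 ≤ (inner ℂ (Phi • x - T x) (T x - phi • x) : ℂ).re) :
    2 * Real.sqrt (Phi * starRingEnd ℂ phi).re * ‖T‖ ≤
      ‖Phi + phi‖ * numRadius T :=
  stmt_10_general T phi Phi hre h
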